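/- arXiv:2503.10394 — 2 statements merged into one kernel-verified Lean document; each statement's English description precedes it below -/
import Mathlib

section
/- If α and β are l-th roots of unity, i.e., α^l = β^l = 1 for some integer l ≥ 1, then the elements X₁₁^l, X₁₂^l, X₂₁^l and X₂₂^l lie in the center of M₂(α,β). -/
/-!
Each generator `y` skew-commutes with the others, `y * x = c • (x * y)`, with `c` a product of
powers of `α` and `β`, so `y * x ^ l = c ^ l • (x ^ l * y) = x ^ l * y`. The one exception is the
pair `X₂₂, X₁₁`: since `E = X₁₂X₂₁` skew-commutes with `X₁₁` with factor `αβ`, induction gives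
`X₂₂X₁₁ⁿ⁺¹ = X₁₁ⁿ⁺¹X₂₂ + (β - α⁻¹)(1 + αβ + ⋯ + (αβ)ⁿ) X₁₁ⁿE`, and at `n + 1 = l` the coefficient
vanishes: either `αβ = 1`, so `β = α⁻¹`, or the geometric sum of the `l`-th root of unity `αβ ≠ 1`
is zero. The same computation in the opposite algebra handles `X₁₁` against `X₂₂ˡ`.
-/

noncomputable section

open MulOpposite

variable {K : Type*} [Field K]

/-- Defining relations of the two-parameter quantum matrix algebra `M₂(α,β)`.
Generators: `0 ↦ X₁₁`, `1 ↦ X₁₂`, `2 ↦ X₂₁`, `3 ↦ X₂₂`. -/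
inductive QMRel (α β : K) : FreeAlgebra K (Fin 4) → FreeAlgebra K (Fin 4) → Prop
  | r12_11 : QMRel α β (FreeAlgebra.ι K 1 * FreeAlgebra.ι K 0)
      (α • (FreeAlgebra.ι K 0 * FreeAlgebra.ι K 1))
  | r21_11 : QMRel α β (FreeAlgebra.ι K 2 * FreeAlgebra.ι K 0)
      (β • (FreeAlgebra.ι K 0 * FreeAlgebra.ι K 2))
  | r22_21 : QMRel α β (FreeAlgebra.ι K 3 * FreeAlgebra.ι K 2)
      (α • (FreeAlgebra.ι K 2 * FreeAlgebra.ι K 3))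
  | r22_12 : QMRel α β (FreeAlgebra.ι K 3 * FreeAlgebra.ι K 1)
      (β • (FreeAlgebra.ι K 1 * FreeAlgebra.ι K 3))
  | r21_12 : QMRel α β (FreeAlgebra.ι K 2 * FreeAlgebra.ι K 1)
      ((β * α⁻¹) • (FreeAlgebra.ι K 1 * FreeAlgebra.ι K 2))
  | r22_11 : QMRel α β (FreeAlgebra.ι K 3 * FreeAlgebra.ι K 0)
      (FreeAlgebra.ι K 0 * FreeAlgebra.ι K 3 + (β - α⁻¹) • (FreeAlgebra.ι K 1 * FreeAlgebra.ι K 2))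

/-- The two-parameter quantum matrix algebra `M₂(α,β)`. -/
abbrev QM (α β : K) : Type _ := RingQuot (QMRel α β)

def X11 (α β : K) : QM α β := RingQuot.mkAlgHom K (QMRel α β) (FreeAlgebra.ι K 0)
def X12 (α β : K) : QM α β := RingQuot.mkAlgHom K (QMRel α β) (FreeAlgebra.ι K 1)
def X21 (α β : K) : QM α β := RingQuot.mkAlgHom K (QMRel α β) (FreeAlgebra.ι K 2)
def X22 (α β : K) : QM α β := RingQuot.mkAlgHom K (QMRel α β) (FreeAlgebra.ι K 3)

/-- The quantum determinant `D = X₁₁X₂₂ − α⁻¹X₁₂X₂₁`. -/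
def Dq (α β : K) : QM α β := X11 α β * X22 α β - α⁻¹ • (X12 α β * X21 α β)

section QCommute

variable {R A : Type*} [CommSemiring R] [Semiring A] [Algebra R A]

theorem mul_pow_of_mul_eq_smul {x y : A} {c : R} (h : y * x = c • (x * y)) (n : ℕ) :
    y * x ^ n = c ^ n • (x ^ n * y) := by
  induction n with
  | zero => simp
  | succ n ih =>
    rw [pow_succ, ← mul_assoc, ih, smul_mul_assoc, mul_assoc, h, mul_smul_comm, smul_smul,
      pow_succ, mul_assoc]

theorem pow_mul_of_mul_eq_smul {x y : A} {c : R} (h : y * x = c • (x * y)) (n : ℕ) :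
    y ^ n * x = c ^ n • (x * y ^ n) := by
  have hop : op x * op y = c • (op y * op x) := by rw [← op_mul, h, op_smul, op_mul]
  simpa only [← op_pow, ← op_mul, ← op_smul, op_inj] using mul_pow_of_mul_eq_smul hop n

theorem commute_pow_right_of_mul_eq_smul {x y : A} {c : R} {n : ℕ} (h : y * x = c • (x * y))
    (hc : c ^ n = 1) : Commute y (x ^ n) := by
  rw [Commute, SemiconjBy, mul_pow_of_mul_eq_smul h, hc, one_smul]

theorem commute_pow_left_of_mul_eq_smul {x y : A} {c : R} {n : ℕ} (h : y * x = c • (x * y))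
    (hc : c ^ n = 1) : Commute (y ^ n) x := by
  rw [Commute, SemiconjBy, pow_mul_of_mul_eq_smul h, hc, one_smul]

theorem mul_pow_succ_of_mul_eq_add_smul {a d e : A} {t q : R} (h : d * a = a * d + t • e)
    (he : e * a = q • (a * e)) (n : ℕ) :
    d * a ^ (n + 1) = a ^ (n + 1) * d + (t * ∑ k ∈ Finset.range (n + 1), q ^ k) • (a ^ n * e) := by
  induction n with
  | zero => simpa using h
  | succ n ih =>
    calc d * a ^ (n + 1 + 1) = (d * a) * a ^ (n + 1) := by rw [mul_assoc, ← pow_succ']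
      _ = a * (d * a ^ (n + 1)) + t • (e * a ^ (n + 1)) := by
          rw [h, add_mul, mul_assoc, smul_mul_assoc]
      _ = a ^ (n + 1 + 1) * d +
          (t * ∑ k ∈ Finset.range (n + 1 + 1), q ^ k) • (a ^ (n + 1) * e) := by
          rw [ih, mul_pow_of_mul_eq_smul he, Finset.sum_range_succ _ (n + 1), mul_add,
            ← mul_assoc, ← pow_succ', mul_smul_comm, ← mul_assoc, ← pow_succ']
          module

theorem commute_pow_right_of_mul_eq_add_smul {a d e : A} {t q : R} {n : ℕ}
    (h : d * a = a * d + t • e) (he : e * a = q • (a * e))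
    (hn : t * ∑ k ∈ Finset.range n, q ^ k = 0) : Commute d (a ^ n) := by
  cases n with
  | zero => simp
  | succ n =>
    rw [Commute, SemiconjBy, mul_pow_succ_of_mul_eq_add_smul h he, hn, zero_smul, add_zero]

theorem commute_pow_left_of_mul_eq_add_smul {a d e : A} {t q : R} {n : ℕ}
    (h : d * a = a * d + t • e) (he : d * e = q • (e * d))
    (hn : t * ∑ k ∈ Finset.range n, q ^ k = 0) : Commute (d ^ n) a := by
  have hop : op a * op d = op d * op a + t • op e := by
    rw [← op_mul, h, op_add, op_smul, op_mul]
  have heop : op e * op d = q • (op d * op e) := by rw [← op_mul, he, op_smul, op_mul]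
  simpa only [← op_pow, unop_op] using (commute_pow_right_of_mul_eq_add_smul hop heop hn).unop.symm

theorem mem_center_of_adjoin_eq_top {s : Set A} (hs : Algebra.adjoin R s = ⊤) {x : A}
    (h : ∀ y ∈ s, Commute y x) : x ∈ Subalgebra.center R A := by
  refine Subalgebra.mem_center_iff.2 fun b => ?_
  have hb : b ∈ Algebra.adjoin R s := hs ▸ Algebra.mem_top
  exact (Algebra.commute_of_mem_adjoin_of_forall_mem_commute hb fun y hy => (h y hy).symm).eq.symm

end QCommute

theorem sub_inv_mul_geom_sum_eq_zero {α β : K} {l : ℕ} (h : (α * β) ^ l = 1) :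
    (β - α⁻¹) * ∑ k ∈ Finset.range l, (α * β) ^ k = 0 := by
  rcases eq_or_ne (α * β) 1 with h1 | h1
  · rw [eq_inv_of_mul_eq_one_right h1, sub_self, zero_mul]
  · rw [geom_sum_eq h1, h, sub_self, zero_div, mul_zero]

section Relations

variable {α β : K}

theorem X12_mul_X11 : X12 α β * X11 α β = α • (X11 α β * X12 α β) := by
  simpa [X12, X11] using RingQuot.mkAlgHom_rel K (QMRel.r12_11 (α := α) (β := β))

theorem X21_mul_X11 : X21 α β * X11 α β = β • (X11 α β * X21 α β) := by
  simpa [X21, X11] using RingQuot.mkAlgHom_rel K (QMRel.r21_11 (α := α) (β := β))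

theorem X22_mul_X21 : X22 α β * X21 α β = α • (X21 α β * X22 α β) := by
  simpa [X22, X21] using RingQuot.mkAlgHom_rel K (QMRel.r22_21 (α := α) (β := β))

theorem X22_mul_X12 : X22 α β * X12 α β = β • (X12 α β * X22 α β) := by
  simpa [X22, X12] using RingQuot.mkAlgHom_rel K (QMRel.r22_12 (α := α) (β := β))

theorem X21_mul_X12 : X21 α β * X12 α β = (β * α⁻¹) • (X12 α β * X21 α β) := by
  simpa [X21, X12] using RingQuot.mkAlgHom_rel K (QMRel.r21_12 (α := α) (β := β))

theorem X22_mul_X11 :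
    X22 α β * X11 α β = X11 α β * X22 α β + (β - α⁻¹) • (X12 α β * X21 α β) := by
  simpa [X22, X11, X12, X21] using RingQuot.mkAlgHom_rel K (QMRel.r22_11 (α := α) (β := β))

theorem X12_mul_X21_mul_X11 :
    X12 α β * X21 α β * X11 α β = (α * β) • (X11 α β * (X12 α β * X21 α β)) := by
  rw [mul_assoc, X21_mul_X11, mul_smul_comm, ← mul_assoc, X12_mul_X11, smul_mul_assoc, smul_smul,
    mul_assoc, mul_comm β α]

theorem X22_mul_X12_mul_X21 :
    X22 α β * (X12 α β * X21 α β) = (α * β) • (X12 α β * X21 α β * X22 α β) := by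
  rw [← mul_assoc, X22_mul_X12, smul_mul_assoc, mul_assoc, X22_mul_X21, mul_smul_comm, smul_smul,
    ← mul_assoc, mul_comm β α]

theorem QM.mem_center_of_commute {x : QM α β} (h11 : Commute (X11 α β) x)
    (h12 : Commute (X12 α β) x) (h21 : Commute (X21 α β) x) (h22 : Commute (X22 α β) x) :
    x ∈ Subalgebra.center K (QM α β) := by
  refine mem_center_of_adjoin_eq_top (s := Set.range (RingQuot.mkAlgHom K (QMRel α β) ∘
    FreeAlgebra.ι K)) ?_ ?_
  · rw [Set.range_comp, Algebra.adjoin_image, FreeAlgebra.adjoin_range_ι, Algebra.map_top,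
      (AlgHom.range_eq_top _).2 (RingQuot.mkAlgHom_surjective K _)]
  · rintro _ ⟨i, rfl⟩
    fin_cases i
    exacts [h11, h12, h21, h22]

end Relations

section Center

variable {α β : K} {l : ℕ}

theorem mul_inv_pow_eq_one (hα : α ^ l = 1) (hβ : β ^ l = 1) : (β * α⁻¹) ^ l = 1 := by
  rw [mul_pow, inv_pow, hα, hβ, inv_one, one_mul]

theorem X11_pow_mem_center (hα : α ^ l = 1) (hβ : β ^ l = 1) :
    X11 α β ^ l ∈ Subalgebra.center K (QM α β) :=
  QM.mem_center_of_commute (Commute.self_pow _ _)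
    (commute_pow_right_of_mul_eq_smul X12_mul_X11 hα)
    (commute_pow_right_of_mul_eq_smul X21_mul_X11 hβ)
    (commute_pow_right_of_mul_eq_add_smul X22_mul_X11 X12_mul_X21_mul_X11
      (sub_inv_mul_geom_sum_eq_zero (by rw [mul_pow, hα, hβ, one_mul])))

theorem X12_pow_mem_center (hα : α ^ l = 1) (hβ : β ^ l = 1) :
    X12 α β ^ l ∈ Subalgebra.center K (QM α β) :=
  QM.mem_center_of_commute (commute_pow_left_of_mul_eq_smul X12_mul_X11 hα).symm
    (Commute.self_pow _ _)
    (commute_pow_right_of_mul_eq_smul X21_mul_X12 (mul_inv_pow_eq_one hα hβ))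
    (commute_pow_right_of_mul_eq_smul X22_mul_X12 hβ)

theorem X21_pow_mem_center (hα : α ^ l = 1) (hβ : β ^ l = 1) :
    X21 α β ^ l ∈ Subalgebra.center K (QM α β) :=
  QM.mem_center_of_commute (commute_pow_left_of_mul_eq_smul X21_mul_X11 hβ).symm
    (commute_pow_left_of_mul_eq_smul X21_mul_X12 (mul_inv_pow_eq_one hα hβ)).symm
    (Commute.self_pow _ _)
    (commute_pow_right_of_mul_eq_smul X22_mul_X21 hα)

theorem X22_pow_mem_center (hα : α ^ l = 1) (hβ : β ^ l = 1) :
    X22 α β ^ l ∈ Subalgebra.center K (QM α β) :=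
  QM.mem_center_of_commute
    (commute_pow_left_of_mul_eq_add_smul X22_mul_X11 X22_mul_X12_mul_X21
      (sub_inv_mul_geom_sum_eq_zero (by rw [mul_pow, hα, hβ, one_mul]))).symm
    (commute_pow_left_of_mul_eq_smul X22_mul_X12 hβ).symm
    (commute_pow_left_of_mul_eq_smul X22_mul_X21 hα).symm
    (Commute.self_pow _ _)

end Center

theorem stmt1_general (α β : K) (l : ℕ) (hα : α ^ l = 1) (hβ : β ^ l = 1) :
    X11 α β ^ l ∈ Subalgebra.center K (QM α β) ∧
    X12 α β ^ l ∈ Subalgebra.center K (QM α β) ∧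
    X21 α β ^ l ∈ Subalgebra.center K (QM α β) ∧
    X22 α β ^ l ∈ Subalgebra.center K (QM α β) :=
  ⟨X11_pow_mem_center hα hβ, X12_pow_mem_center hα hβ, X21_pow_mem_center hα hβ,
    X22_pow_mem_center hα hβ⟩

/-- Corollary 2.3 of the paper. If `α^l = β^l = 1` for some `l ≥ 1`,
then `X₁₁^l, X₁₂^l, X₂₁^l, X₂₂^l` lie in the center of `M₂(α,β)`. -/
theorem stmt1 (α β : K) (l : ℕ) (hl : 1 ≤ l) (hα : α ^ l = 1) (hβ : β ^ l = 1) :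
    X11 α β ^ l ∈ Subalgebra.center K (QM α β) ∧
    X12 α β ^ l ∈ Subalgebra.center K (QM α β) ∧
    X21 α β ^ l ∈ Subalgebra.center K (QM α β) ∧
    X22 α β ^ l ∈ Subalgebra.center K (QM α β) :=
  stmt1_general α β l hα hβ
end
end

section
/- For every μ = (μ₁,μ₂) ∈ (K*)², the stated formulas define a right M₂(α,β)-module structure on V₃(μ), and V₃(μ) is a simple M₂(α,β)-module of K-dimension ord(αβ)·ord(αβ⁻¹). -/
noncomputable section

open MulOpposite

variable {K : Type*} [Field K]

/-- `l₂ := ord(αβ⁻¹)`. -/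
def l2 (α β : K) : ℕ := orderOf (α * β⁻¹)

open Classical in
/-- `l₁ := ord(αβ)` if `ord(β) ∣ ord(αβ)·ord(αβ⁻¹)`, and `l₁ := 2·ord(αβ)` otherwise. -/
def l1 (α β : K) : ℕ :=
  if orderOf β ∣ orderOf (α * β) * orderOf (α * β⁻¹) then orderOf (α * β)
  else 2 * orderOf (α * β)

/-- The underlying vector space of the modules `V₁(μ)` and `V₂(μ)`. -/
abbrev V12 (α β : K) : Type _ := (ZMod (l1 α β) × ZMod (l2 α β)) → K

/-- The underlying vector space of the module `V₃(μ)`. -/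
abbrev V3 (α β : K) : Type _ := (ZMod (orderOf (α * β)) × ZMod (l2 α β)) → K

/-- The basis vectors `e(a,b)` of `V₁(μ)` and `V₂(μ)`. -/
def e12 (α β : K) (a : ZMod (l1 α β)) (b : ZMod (l2 α β)) : V12 α β := Pi.single (a, b) 1

/-- The basis vectors `e(a,b)` of `V₃(μ)`. -/
def e3 (α β : K) (a : ZMod (orderOf (α * β))) (b : ZMod (l2 α β)) : V3 α β := Pi.single (a, b) 1

/-- `ρ` is the representation of `M₂(α,β)` on `V₁(μ₁,μ₂,μ₃,μ₄)` (a right module,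
presented as a `K`-algebra map from the opposite algebra to endomorphisms),
given on the basis `e(a,b)`, `0 ≤ a ≤ l₁−1`, `0 ≤ b ≤ l₂−1`, by the formulas:
`e(a,b)X₁₁ = μ₁β^b e(a⊕1,b)`;
`e(a,b)X₁₂ = μ₂⁻¹μ₃(α⁻¹β)^b(αβ)^{−a} e(a,b−1)` if `b ≠ 0`,
  `e(a,0)X₁₂ = μ₂⁻¹μ₃β^{al₂}(αβ)^{−a} e(a,l₂−1)`;
`e(a,b)X₂₁ = μ₂ e(a,b+1)` if `b ≠ l₂−1`, `e(a,l₂−1)X₂₁ = μ₂β^{−al₂} e(a,0)`;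
`e(a,b)X₂₂ = μ₁⁻¹α^{−b}(μ₄ + β(αβ)^{−a}μ₃) e(a⊖1,b)`,
with index arithmetic modulo `l₁` (first slot) and `l₂` (second slot). -/
def IsV1Rep (α β μ₁ μ₂ μ₃ μ₄ : K)
    (ρ : (QM α β)ᵐᵒᵖ →ₐ[K] Module.End K (V12 α β)) : Prop :=
  (∀ a b, ρ (op (X11 α β)) (e12 α β a b) = (μ₁ * β ^ b.val) • e12 α β (a + 1) b) ∧
  (∀ a b, ρ (op (X12 α β)) (e12 α β a b) =
    (if b = 0 then μ₂⁻¹ * μ₃ * β ^ (a.val * l2 α β) * ((α * β) ^ a.val)⁻¹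
      else μ₂⁻¹ * μ₃ * (α⁻¹ * β) ^ b.val * ((α * β) ^ a.val)⁻¹) • e12 α β a (b - 1)) ∧
  (∀ a b, ρ (op (X21 α β)) (e12 α β a b) =
    (if b.val = l2 α β - 1 then μ₂ * (β ^ (a.val * l2 α β))⁻¹ else μ₂) • e12 α β a (b + 1)) ∧
  (∀ a b, ρ (op (X22 α β)) (e12 α β a b) =
    (μ₁⁻¹ * (α ^ b.val)⁻¹ * (μ₄ + β * ((α * β) ^ a.val)⁻¹ * μ₃)) • e12 α β (a - 1) b)

/-- `ρ` is the representation of `M₂(α,β)` on `V₂(μ₁,μ₂,μ₃)` given on the basis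
`e(a,b)` by:
`e(a,b)X₁₁ = μ₁⁻¹μ₃α⁻¹(α⁻¹β)^b((αβ)^a − 1) e(a−1,b)` if `a ≠ 0`, `e(0,b)X₁₁ = 0`;
`e(a,b)X₁₂ = μ₂⁻¹μ₃β^a(α⁻¹β)^b e(a,b∔(−1))`;
`e(a,b)X₂₁ = μ₂α^a e(a,b∔1)`;
`e(a,b)X₂₂ = μ₁ e(a+1,b)` if `a ≠ l₁−1`, `e(l₁−1,b)X₂₂ = μ₁α^{−bl₁} e(0,b)`. -/
def IsV2Rep (α β μ₁ μ₂ μ₃ : K)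
    (ρ : (QM α β)ᵐᵒᵖ →ₐ[K] Module.End K (V12 α β)) : Prop :=
  (∀ a b, ρ (op (X11 α β)) (e12 α β a b) =
    (if a = 0 then 0
      else μ₁⁻¹ * μ₃ * α⁻¹ * (α⁻¹ * β) ^ b.val * ((α * β) ^ a.val - 1)) • e12 α β (a - 1) b) ∧
  (∀ a b, ρ (op (X12 α β)) (e12 α β a b) =
    (μ₂⁻¹ * μ₃ * β ^ a.val * (α⁻¹ * β) ^ b.val) • e12 α β a (b - 1)) ∧
  (∀ a b, ρ (op (X21 α β)) (e12 α β a b) = (μ₂ * α ^ a.val) • e12 α β a (b + 1)) ∧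
  (∀ a b, ρ (op (X22 α β)) (e12 α β a b) =
    (if a.val = l1 α β - 1 then μ₁ * (α ^ (b.val * l1 α β))⁻¹ else μ₁) • e12 α β (a + 1) b)

/-- `ρ` is the representation of `M₂(α,β)` on `V₃(μ₁,μ₂)` given on the basis
`e(a,b)`, `0 ≤ a ≤ ord(αβ)−1`, `0 ≤ b ≤ l₂−1`, by:
`e(a,b)X₁₁ = μ₂α⁻¹(α⁻¹β)^b((αβ)^a − 1) e(a−1,b)` if `a ≠ 0`, `e(0,b)X₁₁ = 0`;
`e(a,b)X₁₂ = μ₁⁻¹μ₂β^a(α⁻¹β)^b e(a,b∔(−1))`;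
`e(a,b)X₂₁ = μ₁α^a e(a,b∔1)`;
`e(a,b)X₂₂ = e(a+1,b)` if `a ≠ ord(αβ)−1`, `e(ord(αβ)−1,b)X₂₂ = 0`. -/
def IsV3Rep (α β μ₁ μ₂ : K)
    (ρ : (QM α β)ᵐᵒᵖ →ₐ[K] Module.End K (V3 α β)) : Prop :=
  (∀ a b, ρ (op (X11 α β)) (e3 α β a b) =
    (if a = 0 then 0
      else μ₂ * α⁻¹ * (α⁻¹ * β) ^ b.val * ((α * β) ^ a.val - 1)) • e3 α β (a - 1) b) ∧
  (∀ a b, ρ (op (X12 α β)) (e3 α β a b) =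
    (μ₁⁻¹ * μ₂ * β ^ a.val * (α⁻¹ * β) ^ b.val) • e3 α β a (b - 1)) ∧
  (∀ a b, ρ (op (X21 α β)) (e3 α β a b) = (μ₁ * α ^ a.val) • e3 α β a (b + 1)) ∧
  (∀ a b, ρ (op (X22 α β)) (e3 α β a b) =
    if a.val = orderOf (α * β) - 1 then 0 else e3 α β (a + 1) b)

/-!
Each generator acts on `V₃(μ) = K^(ℤ/ord(αβ) × ℤ/l₂)` as a weighted shift `f ↦ c · f(· + t)`, so
every defining relation of `M₂(α,β)` reduces to an identity between weights.

For simplicity, `X₂₁X₁₂` and `X₂₂X₁₁` act diagonally, with eigenvalues `μ₂(αβ)^a(α⁻¹β)^(b+1)` and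
`μ₂α⁻¹(α⁻¹β)^b((αβ)^(a+1) − 1)` that together separate the basis vectors. By Lagrange interpolation
an invariant subspace is then stable under multiplication by every function, so a nonzero one
contains some `e(a,b)`. From there `X₁₁` lowers `a` to `0` (its coefficient `(αβ)^a − 1` is nonzero
for `0 < a < ord(αβ)`), `X₂₁` runs through all `b`, and `X₂₂` raises `a` again.
-/

namespace ZMod

variable {N : ℕ} [NeZero N]

theorem val_add_one_eq_mod (a : ZMod N) : (a + 1).val = (a.val + 1) % N := by
  rw [val_add, val_one_eq_one_mod, Nat.add_mod_mod]

theorem add_one_eq_zero_iff_val_eq {a : ZMod N} : a + 1 = 0 ↔ a.val = N - 1 := by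
  have ha := a.val_lt
  rw [← val_eq_zero, val_add_one_eq_mod]
  constructor
  · intro h
    have := Nat.le_of_dvd (Nat.succ_pos _) (Nat.dvd_of_mod_eq_zero h)
    omega
  · intro h
    rw [h, Nat.sub_add_cancel NeZero.one_le, Nat.mod_self]

theorem val_add_one_of_ne_zero {a : ZMod N} (h : a + 1 ≠ 0) : (a + 1).val = a.val + 1 := by
  rw [val_add_one_eq_mod, Nat.mod_eq_of_lt]
  have := a.val_lt
  have := mt add_one_eq_zero_iff_val_eq.2 h
  omega

theorem val_sub_one_add_one {a : ZMod N} (h : a ≠ 0) : (a - 1).val + 1 = a.val := by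
  rw [← val_add_one_of_ne_zero (by simpa using h), sub_add_cancel]

end ZMod

theorem orderOf_inv₀ {G₀ : Type*} [GroupWithZero G₀] (x : G₀) : orderOf x⁻¹ = orderOf x := by
  simp only [orderOf_eq_orderOf_iff, inv_pow, inv_eq_one, implies_true]

section PowZModVal

variable {M : Type*} [Monoid M] {x : M} {N : ℕ}

theorem pow_mod_of_pow_eq_one (hx : x ^ N = 1) (k : ℕ) : x ^ (k % N) = x ^ k := by
  rw [← pow_mod_orderOf, Nat.mod_mod_of_dvd _ (orderOf_dvd_of_pow_eq_one hx), pow_mod_orderOf]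

theorem pow_zmod_val_one (hx : x ^ N = 1) : x ^ (1 : ZMod N).val = x := by
  rw [ZMod.val_one_eq_one_mod, pow_mod_of_pow_eq_one hx, pow_one]

variable [NeZero N]

theorem pow_zmod_val_add (hx : x ^ N = 1) (a b : ZMod N) :
    x ^ (a + b).val = x ^ a.val * x ^ b.val := by
  rw [ZMod.val_add, pow_mod_of_pow_eq_one hx, pow_add]

theorem pow_zmod_val_add_one (hx : x ^ N = 1) (a : ZMod N) :
    x ^ (a + 1).val = x ^ a.val * x := by
  rw [pow_zmod_val_add hx, pow_zmod_val_one hx]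

theorem pow_zmod_val_injective (hN : orderOf x = N) :
    Function.Injective fun a : ZMod N => x ^ a.val := by
  intro a b h
  have hx : IsOfFinOrder x := orderOf_pos_iff.1 (hN ▸ Nat.pos_of_neZero N)
  apply ZMod.val_injective
  simpa [hx.pow_inj_mod, hN, Nat.mod_eq_of_lt a.val_lt, Nat.mod_eq_of_lt b.val_lt] using h

end PowZModVal

section WeightedShift

variable {I : Type*}

def weightedShift [Add I] (c : I → K) (t : I) : Module.End K (I → K) :=
  LinearMap.mulLeft K c ∘ₗ LinearMap.funLeft K K (· + t)

@[simp]
theorem weightedShift_apply [Add I] (c : I → K) (t : I) (f : I → K) (p : I) :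
    weightedShift c t f p = c p * f (p + t) :=
  rfl

theorem weightedShift_mul [AddSemigroup I] (c d : I → K) (s t : I) :
    weightedShift c s * weightedShift d t =
      weightedShift (fun p => c p * d (p + s)) (s + t) := by
  ext f p
  simp [mul_assoc, add_assoc]

theorem smul_weightedShift [Add I] (r : K) (c : I → K) (t : I) :
    r • weightedShift c t = weightedShift (r • c) t := by
  ext f p
  simp [mul_assoc]

theorem weightedShift_add [Add I] (c d : I → K) (t : I) :
    weightedShift c t + weightedShift d t = weightedShift (c + d) t := by
  ext f p
  simp [add_mul]

theorem weightedShift_zero [AddZeroClass I] (c : I → K) (f : I → K) :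
    weightedShift c 0 f = c * f := by
  ext p
  simp

theorem weightedShift_single [AddGroup I] [DecidableEq I] (c : I → K) (t j : I) :
    weightedShift c t (Pi.single j 1) = c (j - t) • Pi.single (j - t) 1 := by
  ext p
  by_cases hp : p = j - t
  · simp [hp]
  · simp only [weightedShift_apply, Pi.single_apply, hp, Pi.smul_apply, if_false, smul_zero]
    split_ifs with h
    · exact absurd (eq_sub_of_add_eq h) hp
    · exact mul_zero _

end WeightedShift

namespace Submodule

variable {I : Type*}

def multipliers (W : Submodule K (I → K)) : Subalgebra K (I → K) where
  carrier := {h | ∀ w ∈ W, h * w ∈ W}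
  mul_mem' {g h} hg hh w hw := by
    rw [mul_assoc]
    exact hg _ (hh w hw)
  add_mem' hg hh w hw := by
    rw [add_mul]
    exact W.add_mem (hg w hw) (hh w hw)
  algebraMap_mem' c w hw := by
    rw [Algebra.algebraMap_eq_smul_one, smul_mul_assoc, one_mul]
    exact W.smul_mem c hw

variable [DecidableEq I] {W : Submodule K (I → K)}

theorem eq_top_of_forall_single_one_mem [Finite I] (h : ∀ p, Pi.single p 1 ∈ W) : W = ⊤ := by
  rw [eq_top_iff, ← (Pi.basisFun K I).span_eq, span_le]
  rintro _ ⟨p, rfl⟩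
  simpa using h p

variable [Fintype I] {S : Set (I → K)}

theorem single_one_mem_multipliers (hS : S ⊆ W.multipliers)
    (hsep : ∀ p q, p ≠ q → ∃ g ∈ S, g p ≠ g q) (p : I) : Pi.single p 1 ∈ W.multipliers := by
  have separate : ∀ q, ∃ h ∈ W.multipliers, h p = 1 ∧ (q ≠ p → h q = 0) := by
    intro q
    by_cases hq : q = p
    · exact ⟨1, W.multipliers.one_mem, rfl, fun h => absurd hq h⟩
    obtain ⟨g, hgS, hg⟩ := hsep p q (Ne.symm hq)
    refine ⟨(g p - g q)⁻¹ • (g - algebraMap K _ (g q)), ?_, ?_, fun _ => ?_⟩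
    · exact W.multipliers.smul_mem
        (W.multipliers.sub_mem (hS hgS) (W.multipliers.algebraMap_mem _)) _
    · simp [inv_mul_cancel₀ (sub_ne_zero.2 hg)]
    · simp
  choose h hmem hp hq using separate
  convert W.multipliers.prod_mem (t := Finset.univ) fun q _ => hmem q
  ext r
  rw [Finset.prod_apply]
  by_cases hr : r = p
  · simp [hr, hp]
  · rw [Pi.single_eq_of_ne hr]
    exact (Finset.prod_eq_zero (f := fun q => h q r) (Finset.mem_univ r) (hq r hr)).symm

theorem exists_single_one_mem_of_separating (hS : S ⊆ W.multipliers)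
    (hsep : ∀ p q, p ≠ q → ∃ g ∈ S, g p ≠ g q) (hW : W ≠ ⊥) : ∃ p, Pi.single p 1 ∈ W := by
  obtain ⟨w, hw, hw0⟩ := W.ne_bot_iff.1 hW
  obtain ⟨p, hp⟩ := Function.ne_iff.1 hw0
  refine ⟨p, (W.smul_mem_iff hp).1 ?_⟩
  have h := single_one_mem_multipliers hS hsep p w hw
  rw [← Pi.single_mul_left, one_mul] at h
  rwa [← Pi.single_smul', smul_eq_mul, mul_one]

end Submodule

namespace V3

-- The weight vanishes at `p.1 + 1 = 0`, which is what makes `e(0,b)X₁₁ = 0`.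
def x11 (α β μ₂ : K) : Module.End K (V3 α β) :=
  weightedShift (fun p => μ₂ * α⁻¹ * (α⁻¹ * β) ^ p.2.val * ((α * β) ^ (p.1 + 1).val - 1)) (1, 0)

def x12 (α β μ₁ μ₂ : K) : Module.End K (V3 α β) :=
  weightedShift (fun p => μ₁⁻¹ * μ₂ * β ^ p.1.val * (α⁻¹ * β) ^ (p.2 + 1).val) (0, 1)

def x21 (α β μ₁ : K) : Module.End K (V3 α β) :=
  weightedShift (fun p => μ₁ * α ^ p.1.val) (0, -1)

def x22 (α β : K) : Module.End K (V3 α β) :=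
  weightedShift (fun p => if p.1 = 0 then 0 else 1) (-1, 0)

variable {α β μ₁ μ₂ : K}

theorem orderOf_inv_mul : orderOf (α⁻¹ * β) = l2 α β := by
  rw [l2, ← orderOf_inv₀, mul_inv, inv_inv, mul_comm]

theorem pow_l2_eq_one : (α⁻¹ * β) ^ l2 α β = 1 := by
  rw [← orderOf_inv_mul, pow_orderOf_eq_one]

theorem x11_e3 (a : ZMod (orderOf (α * β))) (b : ZMod (l2 α β)) :
    x11 α β μ₂ (e3 α β a b) =
      (if a = 0 then 0 else μ₂ * α⁻¹ * (α⁻¹ * β) ^ b.val * ((α * β) ^ a.val - 1)) •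
        e3 α β (a - 1) b := by
  rw [e3, e3, x11, weightedShift_single, Prod.mk_sub_mk, sub_zero, sub_add_cancel]
  by_cases ha : a = 0 <;> simp [ha]

theorem x12_e3 (a : ZMod (orderOf (α * β))) (b : ZMod (l2 α β)) :
    x12 α β μ₁ μ₂ (e3 α β a b) =
      (μ₁⁻¹ * μ₂ * β ^ a.val * (α⁻¹ * β) ^ b.val) • e3 α β a (b - 1) := by
  rw [e3, e3, x12, weightedShift_single, Prod.mk_sub_mk, sub_zero, sub_add_cancel]

theorem x21_e3 (a : ZMod (orderOf (α * β))) (b : ZMod (l2 α β)) :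
    x21 α β μ₁ (e3 α β a b) = (μ₁ * α ^ a.val) • e3 α β a (b + 1) := by
  rw [e3, e3, x21, weightedShift_single, Prod.mk_sub_mk, sub_zero, sub_neg_eq_add]

theorem x22_e3 [NeZero (orderOf (α * β))] (a : ZMod (orderOf (α * β))) (b : ZMod (l2 α β)) :
    x22 α β (e3 α β a b) = if a.val = orderOf (α * β) - 1 then 0 else e3 α β (a + 1) b := by
  rw [e3, e3, x22, weightedShift_single, Prod.mk_sub_mk, sub_zero, sub_neg_eq_add]
  simp only [← ZMod.add_one_eq_zero_iff_val_eq]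
  by_cases ha : a + 1 = 0 <;> simp [ha]

theorem x11_mul_x22 :
    x11 α β μ₂ * x22 α β = weightedShift
      (fun p => μ₂ * α⁻¹ * (α⁻¹ * β) ^ p.2.val * ((α * β) ^ (p.1 + 1).val - 1)) 0 := by
  rw [x11, x22, weightedShift_mul, Prod.mk_add_mk, add_neg_cancel, add_zero, Prod.mk_zero_zero]
  congr 1
  ext ⟨a, b⟩
  by_cases ha : a + 1 = 0 <;> simp [ha]

theorem x22_mul_x11 :
    x22 α β * x11 α β μ₂ = weightedShift
      (fun p => μ₂ * α⁻¹ * (α⁻¹ * β) ^ p.2.val * ((α * β) ^ p.1.val - 1)) 0 := by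
  rw [x11, x22, weightedShift_mul, Prod.mk_add_mk, neg_add_cancel, add_zero, Prod.mk_zero_zero]
  congr 1
  ext ⟨a, b⟩
  by_cases ha : a = 0 <;> simp [ha]

theorem x21_mul_x12 (hμ₁ : μ₁ ≠ 0) :
    x21 α β μ₁ * x12 α β μ₁ μ₂ =
      weightedShift (fun p => μ₂ * (α * β) ^ p.1.val * (α⁻¹ * β) ^ p.2.val) 0 := by
  rw [x12, x21, weightedShift_mul, Prod.mk_add_mk, add_zero, neg_add_cancel, Prod.mk_zero_zero]
  congr 1
  ext ⟨a, b⟩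
  simp only [Prod.fst_add, Prod.snd_add, add_zero, neg_add_cancel_right, mul_pow]
  field_simp

theorem x12_mul_x21 (hμ₁ : μ₁ ≠ 0) :
    x12 α β μ₁ μ₂ * x21 α β μ₁ =
      weightedShift (fun p => μ₂ * (α * β) ^ p.1.val * (α⁻¹ * β) ^ (p.2 + 1).val) 0 := by
  rw [x12, x21, weightedShift_mul, Prod.mk_add_mk, add_zero, add_neg_cancel, Prod.mk_zero_zero]
  congr 1
  ext ⟨a, b⟩
  simp only [Prod.fst_add, add_zero, mul_pow]
  field_simp

theorem x12_mul_x21_eq_smul [NeZero (l2 α β)] (hμ₁ : μ₁ ≠ 0) :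
    x12 α β μ₁ μ₂ * x21 α β μ₁ = (β * α⁻¹) • (x21 α β μ₁ * x12 α β μ₁ μ₂) := by
  rw [x12_mul_x21 hμ₁, x21_mul_x12 hμ₁, smul_weightedShift]
  congr 1
  ext ⟨a, b⟩
  simp only [Pi.smul_apply, smul_eq_mul, pow_zmod_val_add_one pow_l2_eq_one]
  ring

section Relations

variable [NeZero (orderOf (α * β))]

theorem x11_mul_x12_eq_smul [NeZero (l2 α β)] (hα : α ≠ 0) :
    x11 α β μ₂ * x12 α β μ₁ μ₂ = α • (x12 α β μ₁ μ₂ * x11 α β μ₂) := by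
  rw [x11, x12, weightedShift_mul, weightedShift_mul, smul_weightedShift, add_comm]
  congr 1
  ext ⟨a, b⟩
  simp only [Prod.fst_add, Prod.snd_add, add_zero, Pi.smul_apply, smul_eq_mul,
    pow_zmod_val_add_one pow_l2_eq_one]
  by_cases ha : a + 1 = 0
  · simp [ha]
  · rw [ZMod.val_add_one_of_ne_zero ha]
    field_simp
    ring

theorem x11_mul_x21_eq_smul [NeZero (l2 α β)] (hα : α ≠ 0) :
    x11 α β μ₂ * x21 α β μ₁ = β • (x21 α β μ₁ * x11 α β μ₂) := by
  rw [x11, x21, weightedShift_mul, weightedShift_mul, smul_weightedShift, add_comm]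
  congr 1
  ext ⟨a, b⟩
  obtain ⟨b, rfl⟩ : ∃ b', b = b' + 1 := ⟨b - 1, (sub_add_cancel b 1).symm⟩
  simp only [Prod.fst_add, Prod.snd_add, add_zero, add_neg_cancel_right, Pi.smul_apply,
    smul_eq_mul, pow_zmod_val_add_one pow_l2_eq_one]
  by_cases ha : a + 1 = 0
  · simp [ha]
  · rw [ZMod.val_add_one_of_ne_zero ha]
    field_simp
    ring

theorem x21_mul_x22_eq_smul : x21 α β μ₁ * x22 α β = α • (x22 α β * x21 α β μ₁) := by
  rw [x21, x22, weightedShift_mul, weightedShift_mul, smul_weightedShift, add_comm]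
  congr 1
  ext ⟨a, b⟩
  simp only [Prod.fst_add, add_zero, Pi.smul_apply, smul_eq_mul]
  by_cases ha : a = 0
  · simp [ha]
  · simp only [ha, if_false, ← ZMod.val_sub_one_add_one ha, ← sub_eq_add_neg]
    ring

theorem x12_mul_x22_eq_smul : x12 α β μ₁ μ₂ * x22 α β = β • (x22 α β * x12 α β μ₁ μ₂) := by
  rw [x12, x22, weightedShift_mul, weightedShift_mul, smul_weightedShift, add_comm]
  congr 1
  ext ⟨a, b⟩
  simp only [Prod.fst_add, Prod.snd_add, add_zero, Pi.smul_apply, smul_eq_mul]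
  by_cases ha : a = 0
  · simp [ha]
  · simp only [ha, if_false, ← ZMod.val_sub_one_add_one ha, ← sub_eq_add_neg]
    ring

theorem x11_mul_x22_eq_add (hα : α ≠ 0) (hμ₁ : μ₁ ≠ 0) :
    x11 α β μ₂ * x22 α β =
      x22 α β * x11 α β μ₂ + (β - α⁻¹) • (x21 α β μ₁ * x12 α β μ₁ μ₂) := by
  rw [x11_mul_x22, x22_mul_x11, x21_mul_x12 hμ₁, smul_weightedShift, weightedShift_add]
  congr 1
  ext ⟨a, b⟩
  simp only [Pi.add_apply, Pi.smul_apply, smul_eq_mul,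
    pow_zmod_val_add_one (pow_orderOf_eq_one (α * β))]
  field_simp
  ring

end Relations

section Representation

variable [NeZero (orderOf (α * β))] [NeZero (l2 α β)]

variable (α β μ₁ μ₂) in
def rep (hα : α ≠ 0) (hμ₁ : μ₁ ≠ 0) : (QM α β)ᵐᵒᵖ →ₐ[K] Module.End K (V3 α β) :=
  AlgHom.opComm <| RingQuot.liftAlgHom K
    ⟨FreeAlgebra.lift K ![op (x11 α β μ₂), op (x12 α β μ₁ μ₂), op (x21 α β μ₁), op (x22 α β)],
      fun x y h => by
        cases h <;>
          simp only [map_mul, map_smul, map_add, FreeAlgebra.lift_ι_apply, Matrix.cons_val_zero,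
            Matrix.cons_val_one, Matrix.cons_val_two, Matrix.cons_val_three, Matrix.head_cons,
            Matrix.tail_cons, ← op_mul, ← op_smul, ← op_add, op_inj]
        · exact x11_mul_x12_eq_smul hα
        · exact x11_mul_x21_eq_smul hα
        · exact x21_mul_x22_eq_smul
        · exact x12_mul_x22_eq_smul
        · exact x12_mul_x21_eq_smul hμ₁
        · exact x11_mul_x22_eq_add hα hμ₁⟩

variable (hα : α ≠ 0) (hμ₁ : μ₁ ≠ 0)

theorem rep_X11 : rep α β μ₁ μ₂ hα hμ₁ (op (X11 α β)) = x11 α β μ₂ := by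
  simp [rep, X11, AlgHom.opComm]

theorem rep_X12 : rep α β μ₁ μ₂ hα hμ₁ (op (X12 α β)) = x12 α β μ₁ μ₂ := by
  simp [rep, X12, AlgHom.opComm]

theorem rep_X21 : rep α β μ₁ μ₂ hα hμ₁ (op (X21 α β)) = x21 α β μ₁ := by
  simp [rep, X21, AlgHom.opComm]

theorem rep_X22 : rep α β μ₁ μ₂ hα hμ₁ (op (X22 α β)) = x22 α β := by
  simp [rep, X22, AlgHom.opComm]

theorem isV3Rep_rep : IsV3Rep α β μ₁ μ₂ (rep α β μ₁ μ₂ hα hμ₁) :=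
  ⟨fun a b => by rw [rep_X11, x11_e3], fun a b => by rw [rep_X12, x12_e3],
    fun a b => by rw [rep_X21, x21_e3], fun a b => by rw [rep_X22, x22_e3]⟩

end Representation

section Simple

theorem diagonal_weights_injective [NeZero (orderOf (α * β))] [NeZero (l2 α β)]
    (hα : α ≠ 0) (hβ : β ≠ 0) (hμ₂ : μ₂ ≠ 0) :
    Function.Injective fun p : ZMod (orderOf (α * β)) × ZMod (l2 α β) =>
      (μ₂ * (α * β) ^ p.1.val * (α⁻¹ * β) ^ (p.2 + 1).val,
        μ₂ * α⁻¹ * (α⁻¹ * β) ^ p.2.val * ((α * β) ^ (p.1 + 1).val - 1)) := by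
  rintro ⟨a, b⟩ ⟨a', b'⟩ h
  simp only [Prod.mk.injEq, pow_zmod_val_add_one pow_l2_eq_one,
    pow_zmod_val_add_one (pow_orderOf_eq_one (α * β))] at h
  obtain ⟨hd, he⟩ := h
  have hq : α⁻¹ * β ≠ 0 := mul_ne_zero (inv_ne_zero hα) hβ
  have hab : (α * β) ^ a.val * (α⁻¹ * β) ^ b.val = (α * β) ^ a'.val * (α⁻¹ * β) ^ b'.val := by
    apply mul_left_cancel₀ (mul_ne_zero hμ₂ hq)
    linear_combination hd
  have hb : (α⁻¹ * β) ^ b.val = (α⁻¹ * β) ^ b'.val := by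
    apply mul_left_cancel₀ (mul_ne_zero hμ₂ (inv_ne_zero hα))
    linear_combination (μ₂ * α⁻¹ * (α * β)) * hab - he
  obtain rfl := pow_zmod_val_injective orderOf_inv_mul hb
  obtain rfl := pow_zmod_val_injective rfl (mul_right_cancel₀ (pow_ne_zero _ hq) hab)
  rfl

variable {W : Submodule K (V3 α β)}

theorem e3_zero_mem_of_mem [NeZero (orderOf (α * β))] (hα : α ≠ 0) (hβ : β ≠ 0) (hμ₂ : μ₂ ≠ 0)
    (h11 : ∀ w ∈ W, x11 α β μ₂ w ∈ W) {a : ZMod (orderOf (α * β))} {b : ZMod (l2 α β)}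
    (h : e3 α β a b ∈ W) : e3 α β 0 b ∈ W := by
  suffices ∀ k (a : ZMod (orderOf (α * β))), a.val = k → e3 α β a b ∈ W → e3 α β 0 b ∈ W from
    this _ a rfl h
  intro k
  induction k with
  | zero =>
    intro a ha h
    rwa [(ZMod.val_eq_zero a).1 ha] at h
  | succ k ih =>
    intro a ha h
    have ha0 : a ≠ 0 := by
      rintro rfl
      simp at ha
    have hc : μ₂ * α⁻¹ * (α⁻¹ * β) ^ b.val * ((α * β) ^ a.val - 1) ≠ 0 := by
      have := pow_ne_one_of_lt_orderOf (by omega) a.val_lt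
      simp [hμ₂, hα, hβ, sub_ne_zero.2 this]
    have h' := h11 _ h
    rw [x11_e3, if_neg ha0] at h'
    have := ZMod.val_sub_one_add_one ha0
    exact ih (a - 1) (by omega) ((W.smul_mem_iff hc).1 h')

theorem e3_zero_mem_of_e3_zero_mem [NeZero (l2 α β)] (hμ₁ : μ₁ ≠ 0)
    (h21 : ∀ w ∈ W, x21 α β μ₁ w ∈ W) {b₀ : ZMod (l2 α β)} (h : e3 α β 0 b₀ ∈ W)
    (b : ZMod (l2 α β)) : e3 α β 0 b ∈ W := by
  have hk : ∀ k : ℕ, e3 α β 0 (b₀ + k) ∈ W := by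
    intro k
    induction k with
    | zero => simpa using h
    | succ k ih =>
      have h' := h21 _ ih
      rw [x21_e3] at h'
      rw [Nat.cast_succ, ← add_assoc]
      exact (W.smul_mem_iff (by simp [hμ₁])).1 h'
  simpa using hk (b - b₀).val

theorem e3_mem_of_e3_zero_mem [NeZero (orderOf (α * β))] (h22 : ∀ w ∈ W, x22 α β w ∈ W)
    {b : ZMod (l2 α β)} (h : e3 α β 0 b ∈ W) (a : ZMod (orderOf (α * β))) : e3 α β a b ∈ W := by
  have hk : ∀ k < orderOf (α * β), e3 α β k b ∈ W := by
    intro k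
    induction k with
    | zero => simpa using fun _ => h
    | succ k ih =>
      intro hk
      have h' := h22 _ (ih (by omega))
      rwa [x22_e3, ZMod.val_cast_of_lt (by omega), if_neg (by omega), ← Nat.cast_succ] at h'
  simpa using hk a.val a.val_lt

theorem eq_bot_or_eq_top [NeZero (orderOf (α * β))] [NeZero (l2 α β)]
    (hα : α ≠ 0) (hβ : β ≠ 0) (hμ₁ : μ₁ ≠ 0) (hμ₂ : μ₂ ≠ 0)
    (h11 : ∀ w ∈ W, x11 α β μ₂ w ∈ W) (h12 : ∀ w ∈ W, x12 α β μ₁ μ₂ w ∈ W)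
    (h21 : ∀ w ∈ W, x21 α β μ₁ w ∈ W) (h22 : ∀ w ∈ W, x22 α β w ∈ W) : W = ⊥ ∨ W = ⊤ := by
  refine or_iff_not_imp_left.2 fun hW => ?_
  have hd : (fun p : ZMod (orderOf (α * β)) × ZMod (l2 α β) =>
      μ₂ * (α * β) ^ p.1.val * (α⁻¹ * β) ^ (p.2 + 1).val) ∈ W.multipliers := fun w hw => by
    rw [← weightedShift_zero, ← x12_mul_x21 hμ₁]
    exact h12 _ (h21 _ hw)
  have he : (fun p : ZMod (orderOf (α * β)) × ZMod (l2 α β) =>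
      μ₂ * α⁻¹ * (α⁻¹ * β) ^ p.2.val * ((α * β) ^ (p.1 + 1).val - 1)) ∈ W.multipliers :=
    fun w hw => by
      rw [← weightedShift_zero, ← x11_mul_x22]
      exact h11 _ (h22 _ hw)
  obtain ⟨⟨a₀, b₀⟩, h₀⟩ := W.exists_single_one_mem_of_separating
    (Set.insert_subset_iff.2 ⟨hd, Set.singleton_subset_iff.2 he⟩) (fun p q hpq => by
      by_contra! hc
      exact hpq (diagonal_weights_injective hα hβ hμ₂
        (Prod.ext (hc _ (Set.mem_insert _ _)) (hc _ (Set.mem_insert_of_mem _ rfl))))) hW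
  exact W.eq_top_of_forall_single_one_mem fun ⟨a, b⟩ => e3_mem_of_e3_zero_mem h22
    (e3_zero_mem_of_e3_zero_mem hμ₁ h21 (e3_zero_mem_of_mem hα hβ hμ₂ h11 h₀) b) a

end Simple

end V3

theorem stmt13_general (α β μ₁ μ₂ : K)
    (hα : α ≠ 0) (hβ : β ≠ 0) (hoα : 0 < orderOf α) (hoβ : 0 < orderOf β)
    (hμ₁ : μ₁ ≠ 0) (hμ₂ : μ₂ ≠ 0) :
    ∃ ρ : (QM α β)ᵐᵒᵖ →ₐ[K] Module.End K (V3 α β),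
      IsV3Rep α β μ₁ μ₂ ρ ∧
      ((⊥ : Submodule K (V3 α β)) ≠ ⊤) ∧
      (∀ W : Submodule K (V3 α β),
        (∀ x : (QM α β)ᵐᵒᵖ, ∀ w ∈ W, ρ x w ∈ W) → W = ⊥ ∨ W = ⊤) ∧
      Module.finrank K (V3 α β) = orderOf (α * β) * orderOf (α * β⁻¹) := by
  have hα_fin : IsOfFinOrder α := orderOf_pos_iff.1 hoα
  have hβ_fin : IsOfFinOrder β := orderOf_pos_iff.1 hoβ
  have hβinv_fin : IsOfFinOrder β⁻¹ := orderOf_pos_iff.1 (by rwa [orderOf_inv₀])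
  have : NeZero (orderOf (α * β)) := ⟨(hα_fin.mul hβ_fin).orderOf_pos.ne'⟩
  have : NeZero (l2 α β) := ⟨(hα_fin.mul hβinv_fin).orderOf_pos.ne'⟩
  refine ⟨V3.rep α β μ₁ μ₂ hα hμ₁, V3.isV3Rep_rep hα hμ₁, bot_ne_top, fun W hW => ?_, ?_⟩
  · refine V3.eq_bot_or_eq_top hα hβ hμ₁ hμ₂ ?_ ?_ ?_ ?_
    · simpa only [V3.rep_X11] using hW (op (X11 α β))
    · simpa only [V3.rep_X12] using hW (op (X12 α β))
    · simpa only [V3.rep_X21] using hW (op (X21 α β))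
    · simpa only [V3.rep_X22] using hW (op (X22 α β))
  · rw [Module.finrank_fintype_fun_eq_card, Fintype.card_prod, ZMod.card, ZMod.card, l2]

/-- Theorem 5.3 of the paper. Let `K` be algebraically closed,
`α, β` roots of unity with `αβ ≠ 1`. For every `μ = (μ₁,μ₂) ∈ (K*)²` the stated
formulas define a right `M₂(α,β)`-module structure on `V₃(μ)`, and `V₃(μ)` is a
simple `M₂(α,β)`-module of `K`-dimension `ord(αβ)·ord(αβ⁻¹)`. -/
theorem stmt13 [IsAlgClosed K] (α β μ₁ μ₂ : K)
    (hα : α ≠ 0) (hβ : β ≠ 0) (hoα : 0 < orderOf α) (hoβ : 0 < orderOf β)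
    (hab : α * β ≠ 1)
    (hμ₁ : μ₁ ≠ 0) (hμ₂ : μ₂ ≠ 0) :
    ∃ ρ : (QM α β)ᵐᵒᵖ →ₐ[K] Module.End K (V3 α β),
      IsV3Rep α β μ₁ μ₂ ρ ∧
      ((⊥ : Submodule K (V3 α β)) ≠ ⊤) ∧
      (∀ W : Submodule K (V3 α β),
        (∀ x : (QM α β)ᵐᵒᵖ, ∀ w ∈ W, ρ x w ∈ W) → W = ⊥ ∨ W = ⊤) ∧
      Module.finrank K (V3 α β) = orderOf (α * β) * orderOf (α * β⁻¹) :=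
  stmt13_general α β μ₁ μ₂ hα hβ hoα hoβ hμ₁ hμ₂
end
end
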